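/- Pick integers u > r > 0 and a ∈ F_q^*. Write s := gcd(u−r, q−1) and d := (q−1)/s. Suppose that for every η ∈ μ_{2d} (in a fixed algebraic closure of F_q), the element η + a/η lies in μ_s. Then x^u + a·x^r is a permutation polynomial of F_q if and only if −a ∉ μ_d, gcd(r, s) = 1, and gcd(2d, u+r) ≤ 2. -/

import Mathlib

/-!
Write `x ^ u + a x ^ r = x ^ r h (x ^ s)` with `h y = y ^ m + a` and `u - r = s m`. By the
classical criterion, this permutes `F_q` iff `gcd (r, s) = 1` and `g y = y ^ r h (y) ^ s` permutes
`μ_d`. For `y ∈ μ_d` choose `η` with `η ^ 2 = y`, so `η ∈ μ_{2d}`; the hypothesis applied to `η ^ m`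
says that `h y = η ^ m (η ^ m + a / η ^ m)` with the second factor in `μ_s`, whence
`g (η ^ 2) = η ^ (u + r)`. So `h` does not vanish on `μ_d` (which, `m` being prime to `d`, gives
`-a ∉ μ_d`), and `g` is injective on `μ_d` iff every `τ ∈ μ_{2d}` with `τ ^ (u + r) = 1` has
`τ ^ 2 = 1`, i.e. iff `gcd (2d, u + r) ≤ 2`.
-/

open Polynomial Function Set

theorem IsCyclic.exists_pow_eq_of_pow_eq_one {G : Type*} [CommGroup G] [IsCyclic G] [Finite G]
    {s d : ℕ} (hsd : s * d = Nat.card G) {y : G} (hy : y ^ d = 1) : ∃ x : G, x ^ s = y := by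
  have hs : s ≠ 0 := by
    rintro rfl
    exact Nat.card_pos.ne' (by rw [← hsd, zero_mul])
  have hle : (powMonoidHom s : G →* G).range ≤ (powMonoidHom d).ker := by
    rintro _ ⟨x, rfl⟩
    simp [← pow_mul, hsd, pow_card_eq_one']
  have heq := Subgroup.eq_of_le_of_card_ge hle (by
    rw [IsCyclic.card_powMonoidHom_range, IsCyclic.card_powMonoidHom_ker, ← hsd,
      Nat.gcd_mul_right_left, Nat.gcd_mul_left_left,
      Nat.mul_div_cancel_left _ (Nat.pos_of_ne_zero hs)])
  have hy' : y ∈ (powMonoidHom d : G →* G).ker := hy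
  rw [← heq] at hy'
  exact hy'

theorem pow_mul_comp_pow_pow {M : Type*} [CommMonoid M] {r s : ℕ} (h : M → M) (x : M) :
    (x ^ s) ^ r * h (x ^ s) ^ s = (x ^ r * h (x ^ s)) ^ s := by
  rw [mul_pow, pow_right_comm]

namespace FiniteField

variable {F : Type*} [Field F] [Fintype F]

theorem ne_zero_of_mul_eq_card_sub_one {s d : ℕ} (hsd : s * d = Fintype.card F - 1) :
    d ≠ 0 := by
  rintro rfl
  have := Fintype.one_lt_card (α := F)
  omega

theorem exists_pow_eq_of_pow_eq_one {s d : ℕ} (hsd : s * d = Fintype.card F - 1) {y : F}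
    (hy : y ^ d = 1) : ∃ x : F, x ≠ 0 ∧ x ^ s = y := by
  have hy0 : y ≠ 0 := by
    rintro rfl
    exact zero_ne_one ((zero_pow (ne_zero_of_mul_eq_card_sub_one hsd)).symm.trans hy)
  obtain ⟨x, hx⟩ := IsCyclic.exists_pow_eq_of_pow_eq_one (G := Fˣ) (y := Units.mk0 y hy0)
    (by rw [Nat.card_units, Nat.card_eq_fintype_card, hsd]) (Units.ext (by simpa using hy))
  exact ⟨x, x.ne_zero, by simpa using congrArg Units.val hx⟩

theorem pow_pow_eq_one {s d : ℕ} (hsd : s * d = Fintype.card F - 1) {x : F} (hx : x ≠ 0) :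
    (x ^ s) ^ d = 1 := by
  rw [← pow_mul, hsd, pow_card_sub_one_eq_one x hx]

theorem coprime_of_injective_pow_mul_comp_pow {r s : ℕ} (hs : s ∣ Fintype.card F - 1)
    {h : F → F} (hf : Injective fun x : F => x ^ r * h (x ^ s)) : r.Coprime s := by
  classical
  refine Nat.coprime_of_dvd fun ℓ hℓ hℓr hℓs => ?_
  have : Fact ℓ.Prime := ⟨hℓ⟩
  obtain ⟨ε, hε⟩ := exists_prime_orderOf_dvd_card (G := Fˣ) ℓ
    (by rw [Fintype.card_units]; exact hℓs.trans hs)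
  have hpow : ∀ {k}, ℓ ∣ k → (ε : F) ^ k = 1 := fun hk => by
    rwa [← orderOf_dvd_iff_pow_eq_one, orderOf_units, hε]
  have : (ε : F) = 1 := hf (by simp only [hpow hℓr, hpow hℓs, one_pow])
  exact hℓ.one_lt.ne' (by rw [← hε, ← orderOf_units, this, orderOf_one])

section PowMulCompPow

variable {r s d : ℕ} {h : F → F}

theorem bijOn_of_bijective_pow_mul_comp_pow (hr : r ≠ 0) (hsd : s * d = Fintype.card F - 1)
    (hf : Bijective fun x : F => x ^ r * h (x ^ s)) :
    BijOn (fun y => y ^ r * h y ^ s) {y | y ^ d = 1} {y | y ^ d = 1} := by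
  have hf0 : ∀ {x : F}, x ≠ 0 → x ^ r * h (x ^ s) ≠ 0 := fun hx hfx =>
    hx (hf.1 (hfx.trans (by simp [hr])))
  have hmaps : MapsTo (fun y => y ^ r * h y ^ s) {y | y ^ d = 1} {y | y ^ d = 1} := by
    intro y hy
    obtain ⟨x, hx, rfl⟩ := exists_pow_eq_of_pow_eq_one hsd hy
    simp only [mem_ofPred_eq, pow_mul_comp_pow_pow]
    exact pow_pow_eq_one hsd (hf0 hx)
  refine (toFinite _).surjOn_iff_bijOn_of_mapsTo hmaps |>.mp fun z hz => ?_
  obtain ⟨x₀, hx₀, rfl⟩ := exists_pow_eq_of_pow_eq_one hsd hz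
  obtain ⟨x, rfl⟩ := hf.2 x₀
  have hx : x ≠ 0 := by rintro rfl; simp [hr] at hx₀
  exact ⟨x ^ s, pow_pow_eq_one hsd hx, pow_mul_comp_pow_pow h x⟩

theorem injective_pow_mul_comp_pow (hr : r ≠ 0) (hsd : s * d = Fintype.card F - 1)
    (hrs : r.Coprime s) (hg : BijOn (fun y => y ^ r * h y ^ s) {y | y ^ d = 1} {y | y ^ d = 1}) :
    Injective fun x : F => x ^ r * h (x ^ s) := by
  have hs : s ≠ 0 := ne_zero_of_mul_eq_card_sub_one (by rw [mul_comm, hsd])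
  have hf0 : ∀ {x : F}, x ≠ 0 → x ^ r * h (x ^ s) ≠ 0 := fun {x} hx hfx => by
    have := hg.mapsTo (pow_pow_eq_one hsd hx)
    simp [pow_mul_comp_pow_pow, hfx, hs, ne_zero_of_mul_eq_card_sub_one hsd] at this
  intro x x' hxx'
  simp only at hxx'
  by_cases hx : x = 0
  · subst hx
    by_contra hx'
    exact hf0 (Ne.symm hx') (hxx'.symm.trans (by simp [hr]))
  by_cases hx' : x' = 0
  · subst hx'
    exact absurd (hxx'.trans (by simp [hr])) (hf0 hx)
  have hxs : x ^ s = x' ^ s := hg.injOn (pow_pow_eq_one hsd hx) (pow_pow_eq_one hsd hx')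
    (by simp only [pow_mul_comp_pow_pow, hxx'])
  have hxr : x ^ r = x' ^ r := by
    rw [hxs] at hxx'
    exact mul_right_cancel₀ (right_ne_zero_of_mul (hf0 hx')) hxx'
  rw [← div_eq_one_iff_eq hx', ← pow_eq_one_iff_of_coprime hrs, div_pow, div_pow, hxr, hxs,
    div_self (pow_ne_zero _ hx'), div_self (pow_ne_zero _ hx')]
  exact ⟨rfl, rfl⟩

theorem bijective_pow_mul_comp_pow_iff (hr : r ≠ 0) (hsd : s * d = Fintype.card F - 1) :
    Bijective (fun x : F => x ^ r * h (x ^ s)) ↔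
      r.Coprime s ∧ BijOn (fun y => y ^ r * h y ^ s) {y | y ^ d = 1} {y | y ^ d = 1} := by
  refine ⟨fun hf => ⟨coprime_of_injective_pow_mul_comp_pow ⟨d, hsd.symm⟩ hf.1,
    bijOn_of_bijective_pow_mul_comp_pow hr hsd hf⟩, fun ⟨hrs, hg⟩ => ?_⟩
  exact Finite.injective_iff_bijective.mp (injective_pow_mul_comp_pow hr hsd hrs hg)

theorem mapsTo_pow_mul_pow (hsd : s * d = Fintype.card F - 1)
    (hh : ∀ y : F, y ^ d = 1 → h y ≠ 0) :
    MapsTo (fun y => y ^ r * h y ^ s) {y | y ^ d = 1} {y | y ^ d = 1} := fun y hy => by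
  simp only [mem_ofPred_eq] at hy ⊢
  rw [mul_pow, ← pow_mul, mul_comm r, pow_mul, hy, one_pow, one_mul, pow_pow_eq_one hsd (hh y hy)]

end PowMulCompPow

end FiniteField

theorem sq_pow_mul_sq_pow_add_pow {K : Type*} [Field K] {η b : K} {r m s : ℕ} (hη : η ≠ 0)
    (h : (η ^ m + b / η ^ m) ^ s = 1) :
    (η ^ 2) ^ r * ((η ^ 2) ^ m + b) ^ s = η ^ (2 * r + m * s) := by
  have hfac : (η ^ 2) ^ m + b = η ^ m * (η ^ m + b / η ^ m) := by
    field_simp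
    ring
  rw [hfac, mul_pow, h, mul_one, ← pow_mul, ← pow_mul, pow_add]

section Extension

variable {F L : Type*} [Field F] [Field L] [Algebra F L] {a : F} {r m s d : ℕ}

theorem ne_zero_of_sq_eq_algebraMap (hd : d ≠ 0) {y : F} (hy : y ^ d = 1) {η : L}
    (hη : η ^ 2 = algebraMap F L y) : η ≠ 0 := by
  rintro rfl
  rw [zero_pow two_ne_zero, eq_comm, map_eq_zero] at hη
  exact (IsUnit.of_pow_eq_one hy hd).ne_zero hη

theorem algebraMap_pow_mul_pow_add_pow
    (H : ∀ η : L, η ^ (2 * d) = 1 → (η + algebraMap F L a / η) ^ s = 1) (hd : d ≠ 0)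
    {y : F} (hy : y ^ d = 1) {η : L} (hη : η ^ 2 = algebraMap F L y) :
    algebraMap F L (y ^ r * (y ^ m + a) ^ s) = η ^ (2 * r + m * s) := by
  have hηm : (η ^ m) ^ (2 * d) = 1 := by
    rw [← pow_mul, mul_comm m, pow_mul, pow_mul, hη, ← map_pow, hy, map_one, one_pow]
  rw [← sq_pow_mul_sq_pow_add_pow (ne_zero_of_sq_eq_algebraMap hd hy hη) (H _ hηm), hη]
  simp

theorem pow_add_ne_zero_of_pow_eq_one [IsAlgClosed L]
    (H : ∀ η : L, η ^ (2 * d) = 1 → (η + algebraMap F L a / η) ^ s = 1) (hd : d ≠ 0)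
    (hs : s ≠ 0) {y : F} (hy : y ^ d = 1) : y ^ m + a ≠ 0 := by
  intro hya
  obtain ⟨η, hη⟩ := IsAlgClosed.exists_pow_nat_eq (algebraMap F L y) two_pos
  have hval := algebraMap_pow_mul_pow_add_pow (r := 0) (m := m) H hd hy hη
  rw [hya, zero_pow hs, mul_zero, map_zero] at hval
  exact pow_ne_zero _ (ne_zero_of_sq_eq_algebraMap hd hy hη) hval.symm

variable [Fintype F] [IsAlgClosed L]

theorem exists_ne_one_sq_eq_algebraMap_pow_eq_one {n : ℕ} (hd : d ∣ Fintype.card F - 1)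
    (h : 2 < Nat.gcd (2 * d) n) :
    ∃ w : F, w ≠ 1 ∧ w ^ d = 1 ∧ ∃ t : L, t ^ 2 = algebraMap F L w ∧ t ^ n = 1 := by
  classical
  have hcard := Fintype.one_lt_card (α := F)
  rcases Nat.four_dvd_or_exists_odd_prime_and_dvd_of_two_lt h with h4 | ⟨ℓ, hℓ, hℓe, hℓodd⟩
  · obtain ⟨d', rfl⟩ : 2 ∣ d := by
      have := h4.trans (Nat.gcd_dvd_left _ _)
      omega
    have hchar : ringChar F ≠ 2 := fun h2 => by
      have := FiniteField.even_card_of_char_two h2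
      have := dvd_of_mul_right_dvd hd
      omega
    obtain ⟨t, ht⟩ := IsAlgClosed.exists_pow_nat_eq (algebraMap F L (-1)) two_pos
    obtain ⟨k, hk⟩ := h4.trans (Nat.gcd_dvd_right _ _)
    refine ⟨-1, Ring.neg_one_ne_one_of_char_ne_two hchar, by simp [pow_mul], t, ht, ?_⟩
    rw [hk, show 4 * k = 2 * (2 * k) by ring, pow_mul, ht, pow_mul]
    simp
  · have : Fact ℓ.Prime := ⟨hℓ⟩
    have hℓd : ℓ ∣ d :=
      hℓodd.coprime_two_right.dvd_of_dvd_mul_left (hℓe.trans (Nat.gcd_dvd_left _ _))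
    obtain ⟨ε, hε⟩ := exists_prime_orderOf_dvd_card (G := Fˣ) ℓ
      (by rw [Fintype.card_units]; exact hℓd.trans hd)
    have hpow : ∀ {k}, (ε : F) ^ k = 1 ↔ ℓ ∣ k := by
      intro k
      rw [← orderOf_dvd_iff_pow_eq_one, orderOf_units, hε]
    refine ⟨ε ^ 2, fun h2 => ?_, by rw [← pow_mul, hpow]; exact hℓd.mul_left 2,
      algebraMap F L ε, by rw [map_pow], by
        rw [← map_pow, hpow.mpr (hℓe.trans (Nat.gcd_dvd_right _ _)), map_one]⟩
    have := Nat.le_of_dvd two_pos (hpow.mp h2)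
    obtain ⟨j, rfl⟩ := hℓodd
    have := hℓ.two_le
    omega

theorem injOn_iff_gcd_le_two {g : F → F} {n : ℕ} (hd : d ∣ Fintype.card F - 1)
    (hg : ∀ y : F, y ^ d = 1 → ∀ η : L, η ^ 2 = algebraMap F L y → algebraMap F L (g y) = η ^ n) :
    InjOn g {y | y ^ d = 1} ↔ Nat.gcd (2 * d) n ≤ 2 := by
  have hd0 : d ≠ 0 :=
    ne_zero_of_dvd_ne_zero (by have := Fintype.one_lt_card (α := F); omega) hd
  constructor
  · intro hinj
    by_contra! h
    obtain ⟨w, hw1, hwd, t, ht, htn⟩ := exists_ne_one_sq_eq_algebraMap_pow_eq_one (L := L) hd h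
    refine hw1 (hinj hwd (one_pow d) ((algebraMap F L).injective ?_))
    rw [hg w hwd t ht, hg 1 (one_pow d) 1 (by simp), htn, one_pow]
  · intro hle y hy y' hy' hyy'
    obtain ⟨η, hη⟩ := IsAlgClosed.exists_pow_nat_eq (algebraMap F L y) two_pos
    obtain ⟨η', hη'⟩ := IsAlgClosed.exists_pow_nat_eq (algebraMap F L y') two_pos
    have hη0 := ne_zero_of_sq_eq_algebraMap hd0 hy hη
    have hη0' := ne_zero_of_sq_eq_algebraMap hd0 hy' hη'
    have hτ : (η / η') ^ Nat.gcd (2 * d) n = 1 := by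
      rw [pow_gcd_eq_one, div_pow, div_pow, div_eq_one_iff_eq (pow_ne_zero _ hη0'),
        div_eq_one_iff_eq (pow_ne_zero _ hη0'), pow_mul, pow_mul, hη, hη', ← map_pow, ← map_pow,
        hy, hy', ← hg y hy η hη, ← hg y' hy' η' hη', hyy']
      exact ⟨rfl, rfl⟩
    have hτ2 : (η / η') ^ 2 = 1 := by
      have h2 : Nat.gcd (2 * d) n ∣ 2 := by
        have := Nat.gcd_pos_of_pos_left n (show 0 < 2 * d by omega)
        interval_cases Nat.gcd (2 * d) n <;> norm_num
      obtain ⟨k, hk⟩ := h2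
      rw [hk, pow_mul, hτ, one_pow]
    rw [div_pow, div_eq_one_iff_eq (pow_ne_zero _ hη0'), hη, hη'] at hτ2
    exact (algebraMap F L).injective hτ2

end Extension

theorem stmt_6_general {F : Type*} [Field F] [Fintype F] {q : ℕ} (hq : Fintype.card F = q)
    {u r : ℕ} (hru : r < u) (hr : 0 < r) (a : F)
    (s d : ℕ) (hs : s = Nat.gcd (u - r) (q - 1)) (hd : d = (q - 1) / s)
    (hyp : ∀ η : AlgebraicClosure F, η ^ (2 * d) = 1 →
      (η + algebraMap F (AlgebraicClosure F) a / η) ^ s = 1) :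
    Function.Bijective (fun c : F => (X ^ u + C a * X ^ r).eval c) ↔
      ((-a) ^ d ≠ 1 ∧ Nat.gcd r s = 1 ∧ Nat.gcd (2 * d) (u + r) ≤ 2) := by
  subst hq
  have hsd : s * d = Fintype.card F - 1 := by
    rw [hd, hs]
    exact Nat.mul_div_cancel' (Nat.gcd_dvd_right _ _)
  have hd0 : d ≠ 0 := FiniteField.ne_zero_of_mul_eq_card_sub_one hsd
  have hs0 : s ≠ 0 := FiniteField.ne_zero_of_mul_eq_card_sub_one (by rw [mul_comm, hsd])
  obtain ⟨m, hm⟩ : s ∣ u - r := hs ▸ Nat.gcd_dvd_left _ _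
  have hmd : m.Coprime d := by
    have := Nat.coprime_div_gcd_div_gcd (hs ▸ Nat.pos_of_ne_zero hs0)
    rwa [← hs, hm, ← hsd, Nat.mul_div_cancel_left _ (Nat.pos_of_ne_zero hs0),
      Nat.mul_div_cancel_left _ (Nat.pos_of_ne_zero hs0)] at this
  have hf : (fun c : F => (X ^ u + C a * X ^ r).eval c) = fun x => x ^ r * ((x ^ s) ^ m + a) := by
    funext x
    rw [show u = r + s * m by omega]
    simp only [eval_add, eval_pow, eval_X, eval_mul, eval_C]
    ring
  have hne : ∀ y : F, y ^ d = 1 → y ^ m + a ≠ 0 := fun y =>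
    pow_add_ne_zero_of_pow_eq_one hyp hd0 hs0
  have hval : ∀ y : F, y ^ d = 1 → ∀ η : AlgebraicClosure F, η ^ 2 = algebraMap F _ y →
      algebraMap F _ (y ^ r * (y ^ m + a) ^ s) = η ^ (u + r) := by
    intro y hy η hη
    rw [algebraMap_pow_mul_pow_add_pow hyp hd0 hy hη, show 2 * r + m * s = u + r by
      rw [mul_comm m s]; omega]
  have hneg : (-a) ^ d ≠ 1 := by
    intro h
    obtain ⟨y, hya, hy⟩ := (pow_eq_pow_iff_of_coprime hmd.symm).mp (h.trans (one_pow m).symm)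
    exact hne y hy.symm (by rw [← hya, neg_add_cancel])
  rw [hf, FiniteField.bijective_pow_mul_comp_pow_iff (h := fun y => y ^ m + a) hr.ne' hsd,
    ← (toFinite _).injOn_iff_bijOn_of_mapsTo (FiniteField.mapsTo_pow_mul_pow hsd hne),
    injOn_iff_gcd_le_two (Dvd.intro_left s hsd) hval]
  exact ⟨fun h => ⟨hneg, h⟩, fun h => h.2⟩

/-- Pick u > r > 0 and a ∈ F_q^*. Write s := gcd(u−r, q−1) and d := (q−1)/s.
Suppose (η + a/η) ∈ μ_s for every η ∈ μ_{2d} in an algebraic closure of F_q. Then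
x^u + a·x^r permutes F_q iff −a ∉ μ_d, gcd(r, s) = 1, and gcd(2d, u+r) ≤ 2. -/
theorem stmt_6 {F : Type*} [Field F] [Fintype F] {q : ℕ} (hq : Fintype.card F = q)
    {u r : ℕ} (hru : r < u) (hr : 0 < r) (a : F) (ha : a ≠ 0)
    (s d : ℕ) (hs : s = Nat.gcd (u - r) (q - 1)) (hd : d = (q - 1) / s)
    (hyp : ∀ η : AlgebraicClosure F, η ^ (2 * d) = 1 →
      (η + algebraMap F (AlgebraicClosure F) a / η) ^ s = 1) :
    Function.Bijective (fun c : F => (X ^ u + C a * X ^ r).eval c) ↔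
      ((-a) ^ d ≠ 1 ∧ Nat.gcd r s = 1 ∧ Nat.gcd (2 * d) (u + r) ≤ 2) :=
  stmt_6_general hq hru hr a s d hs hd hyp
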